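/- arXiv:2011.12344 — 4 statements merged into one kernel-verified Lean document; each statement's English description precedes it below -/
import Mathlib

section
/- Let c ∈ ℝ^K with c_k ≤ 0 for all k ∈ K, and let x† ∈ X be feasible for c. Set λ_k = −2c_k/w_k (so λ_k ≥ 0) and assume the KKT conditions hold at x†: (stationarity) 2(x† − x⁰) + Σ_{k∈K} λ_k ∇f_k(x†) = 0, and (complementary slackness) λ_k·(f_k(x†) + c_k) = 0 for every k ∈ K. Assume further that there is a neighborhood N of x† such that for every k with c_k ≠ 0 (so that f_k(x†) = −c_k > 0) and every x ∈ N: f_k(x) ≥ f_k(x†) + ⟨x − x†, ∇f_k(x†)⟩ − (f_k(x) − f_k(x†))²/(2 f_k(x†)). Then for every x′ ∈ N and every c′ ∈ ℝ^K such that x′ is feasible for c′, it holds that ‖x† − x⁰‖² − ‖x′ − x⁰‖² ≤ Σ_{k∈K} (c′_k)²/w_k − Σ_{k∈K} c_k²/w_k; that is, c is a local credibility profile. -/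
open scoped RealInnerProductSpace

/-- **Theorem 2 (counterfactual certification of local credibility profiles).**
If the KKT conditions hold at a feasible point `xd` with multipliers
`λ k = -2 c k / w k`, and the quadratic non-convexity bound holds on a
neighborhood `N` of `xd`, then `c` is a local credibility profile. -/
theorem counterfactual_local_credibility
    {X : Type*} [NormedAddCommGroup X] [InnerProductSpace ℝ X] [FiniteDimensional ℝ X]
    {K : Type*} [Fintype K]
    (x0 : X) (w : K → ℝ) (hw : ∀ k, 0 < w k)
    (f : K → X → ℝ) (g : K → X → X)
    (hf_nonneg : ∀ k x, 0 ≤ f k x)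
    (hgrad : ∀ k x, HasGradientAt (f k) (g k x) x)
    (c : K → ℝ) (hc : ∀ k, c k ≤ 0)
    (xd : X) (hfeas : ∀ k, f k xd ≤ -c k)
    (hstat : (2 : ℝ) • (xd - x0) + ∑ k, (-2 * c k / w k) • g k xd = 0)
    (hcs : ∀ k, (-2 * c k / w k) * (f k xd + c k) = 0)
    (N : Set X) (hN : N ∈ nhds xd)
    (hquad : ∀ k, c k ≠ 0 → ∀ x ∈ N,
      f k x ≥ f k xd + ⟪x - xd, g k xd⟫ - (f k x - f k xd) ^ 2 / (2 * f k xd)) :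
    ∀ x' ∈ N, ∀ c' : K → ℝ, (∀ k, f k x' ≤ -c' k) →
      ‖xd - x0‖ ^ 2 - ‖x' - x0‖ ^ 2 ≤ ∑ k, (c' k) ^ 2 / w k - ∑ k, (c k) ^ 2 / w k := by
  intro x' hx' c' hfeas'
  set v := x' - xd with hv
  -- expand the norm
  have hexp : ‖x' - x0‖ ^ 2 = ‖v‖ ^ 2 + 2 * ⟪v, xd - x0⟫ + ‖xd - x0‖ ^ 2 := by
    have hx : x' - x0 = v + (xd - x0) := by rw [hv]; abel
    rw [hx, norm_add_sq_real]
  -- inner product with stationarity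
  have hinner : 2 * ⟪v, xd - x0⟫ + ∑ k, (-2 * c k / w k) * ⟪v, g k xd⟫ = 0 := by
    have h := congrArg (fun y => ⟪v, y⟫) hstat
    simpa [inner_add_right, inner_sum, inner_smul_right, mul_comm] using h
  -- termwise bound
  have hterm : ∀ k, (-2 * c k / w k) * ⟪v, g k xd⟫ ≤ (c' k) ^ 2 / w k - (c k) ^ 2 / w k := by
    intro k
    rcases eq_or_ne (c k) 0 with h0 | h0
    · have : 0 ≤ (c' k) ^ 2 / w k := div_nonneg (sq_nonneg _) (hw k).le
      simp [h0]
      linarith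
    · have hck : c k < 0 := lt_of_le_of_ne (hc k) h0
      have hlpos : 0 < -2 * c k / w k := by
        apply div_pos (by linarith) (hw k)
      have ha : f k xd = -c k := by
        have := hcs k
        rcases mul_eq_zero.mp this with h | h
        · exact absurd h (ne_of_gt hlpos)
        · linarith
      set a := f k xd with hadef
      set b := f k x' with hbdef
      have hapos : 0 < a := by rw [ha]; linarith
      have hb0 : 0 ≤ b := hf_nonneg k x'
      have hb1 : b ≤ -c' k := hfeas' k
      have hq := hquad k h0 x' hx'
      have hi : ⟪v, g k xd⟫ ≤ b - a + (b - a) ^ 2 / (2 * a) := by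
        rw [hv]; linarith [hq]
      have hdiv : (b - a) ^ 2 / (2 * a) * (2 * a) = (b - a) ^ 2 :=
        div_mul_cancel₀ _ (by positivity)
      have key : 2 * a * ⟪v, g k xd⟫ ≤ b ^ 2 - a ^ 2 := by
        nlinarith [mul_le_mul_of_nonneg_left hi (by positivity : (0:ℝ) ≤ 2 * a)]
      have hb2 : b ^ 2 ≤ (c' k) ^ 2 := by nlinarith
      have hac : a ^ 2 = (c k) ^ 2 := by rw [ha]; ring
      have : (-2 * c k / w k) * ⟪v, g k xd⟫ = (2 * a * ⟪v, g k xd⟫) / w k := by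
        rw [ha]; ring
      rw [this, ← sub_div]
      have final : 2 * a * ⟪v, g k xd⟫ ≤ (c' k) ^ 2 - (c k) ^ 2 := by linarith
      exact div_le_div_of_nonneg_right final (hw k).le
  have hsum : ∑ k, (-2 * c k / w k) * ⟪v, g k xd⟫ ≤ ∑ k, ((c' k) ^ 2 / w k - (c k) ^ 2 / w k) :=
    Finset.sum_le_sum fun k _ => hterm k
  rw [Finset.sum_sub_distrib] at hsum
  linarith [hsum, hexp, sq_nonneg ‖v‖]
end

section
/- Let c ∈ ℝ^K with c_k ≤ 0 for all k ∈ K, and let x† ∈ X be feasible for c. Set λ_k = −2c_k/w_k and assume: (stationarity) 2(x† − x⁰) + Σ_{k∈K} λ_k ∇f_k(x†) = 0; (complementary slackness) λ_k·(f_k(x†) + c_k) = 0 for every k; and, for every k with c_k ≠ 0 and every x ∈ X: f_k(x) ≥ f_k(x†) + ⟨x − x†, ∇f_k(x†)⟩ − (f_k(x) − f_k(x†))²/(2 f_k(x†)) (i.e., the quadratic lower-bound condition holds globally). Then for every x′ ∈ X and every c′ ∈ ℝ^K such that x′ is feasible for c′, ‖x† − x⁰‖² − ‖x′ − x⁰‖²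 ≤ Σ_{k∈K} (c′_k)²/w_k − Σ_{k∈K} c_k²/w_k; that is, c is a global credibility profile in the sense of Definition 1. -/
open scoped RealInnerProductSpace

/-- **Global version of Theorem 2.** If the KKT conditions hold at a feasible point `xd`
with multipliers `λ k = -2 c k / w k`, and the quadratic lower-bound condition holds
globally, then `c` is a global credibility profile (Definition 1). -/
theorem counterfactual_global_credibility
    {X : Type*} [NormedAddCommGroup X] [InnerProductSpace ℝ X] [FiniteDimensional ℝ X]
    {K : Type*} [Fintype K]
    (x0 : X) (w : K → ℝ) (hw : ∀ k, 0 < w k)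
    (f : K → X → ℝ) (g : K → X → X)
    (hf_nonneg : ∀ k x, 0 ≤ f k x)
    (hgrad : ∀ k x, HasGradientAt (f k) (g k x) x)
    (c : K → ℝ) (hc : ∀ k, c k ≤ 0)
    (xd : X) (hfeas : ∀ k, f k xd ≤ -c k)
    (hstat : (2 : ℝ) • (xd - x0) + ∑ k, (-2 * c k / w k) • g k xd = 0)
    (hcs : ∀ k, (-2 * c k / w k) * (f k xd + c k) = 0)
    (hquad : ∀ k, c k ≠ 0 → ∀ x : X,
      f k x ≥ f k xd + ⟪x - xd, g k xd⟫ - (f k x - f k xd) ^ 2 / (2 * f k xd)) :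
    ∀ x' : X, ∀ c' : K → ℝ, (∀ k, f k x' ≤ -c' k) →
      ‖xd - x0‖ ^ 2 - ‖x' - x0‖ ^ 2 ≤ ∑ k, (c' k) ^ 2 / w k - ∑ k, (c k) ^ 2 / w k := by
  intro x' c' hfeas'
  -- per-index key inequality
  have key : ∀ k, (-2 * c k / w k) * ⟪x' - xd, g k xd⟫
      ≤ (c' k) ^ 2 / w k - (c k) ^ 2 / w k := by
    intro k
    have hwk := hw k
    have hb0 := hf_nonneg k x'
    have hb := hfeas' k
    by_cases hck : c k = 0
    · have h1 : 0 ≤ (c' k) ^ 2 / w k := by positivity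
      simpa [hck] using h1
    · have hcneg : c k < 0 := lt_of_le_of_ne (hc k) hck
      have hfa : f k xd = -c k := by
        have h := hcs k
        have hne : (-2 * c k / w k) ≠ 0 := by
          apply div_ne_zero <;> [nlinarith; linarith]
        have := (mul_eq_zero.mp h).resolve_left hne
        linarith
      have hq := hquad k hck x'
      set a := f k xd with ha
      set b := f k x' with hbdef
      have hapos : 0 < a := by rw [hfa]; linarith
      have h2 : (⟪x' - xd, g k xd⟫ - b + a) * (2 * a) ≤ (b - a) ^ 2 := by
        rw [← le_div_iff₀ (by positivity)]
        linarith
      have hb2 : b ^ 2 ≤ (c' k) ^ 2 := by nlinarith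
      have h3 : 2 * a * ⟪x' - xd, g k xd⟫ ≤ b ^ 2 - a ^ 2 := by nlinarith [h2]
      have e1 : -2 * c k = 2 * a := by rw [hfa]; ring
      have e2 : (c k) ^ 2 = a ^ 2 := by
        have : c k = -a := by rw [hfa]; ring
        rw [this]; ring
      have hgoal : (-2 * c k) * ⟪x' - xd, g k xd⟫ ≤ (c' k) ^ 2 - (c k) ^ 2 := by
        rw [e1, e2]; linarith
      rw [div_mul_eq_mul_div, div_sub_div_same]
      exact (div_le_div_iff_of_pos_right hwk).mpr hgoal
  -- expand norm
  have hexp : ‖x' - x0‖ ^ 2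
      = ‖x' - xd‖ ^ 2 + 2 * ⟪x' - xd, xd - x0⟫ + ‖xd - x0‖ ^ 2 := by
    rw [show x' - x0 = (x' - xd) + (xd - x0) by abel, norm_add_sq_real]
  have hlink : (2 : ℝ) * ⟪x' - xd, xd - x0⟫
      + ∑ k, (-2 * c k / w k) * ⟪x' - xd, g k xd⟫ = 0 := by
    have h := congrArg (fun v => ⟪x' - xd, v⟫) hstat
    simpa [inner_add_right, inner_smul_right, inner_sum, real_inner_smul_right]
      using h
  have hsum : ∑ k, (-2 * c k / w k) * ⟪x' - xd, g k xd⟫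
      ≤ ∑ k, ((c' k) ^ 2 / w k - (c k) ^ 2 / w k) :=
    Finset.sum_le_sum fun k _ => key k
  rw [Finset.sum_sub_distrib] at hsum
  nlinarith [sq_nonneg ‖x' - xd‖]
end

section
/- Let c ∈ ℝ^K with c_k ≤ 0 for all k, let x† ∈ X, set λ_k = −2c_k/w_k, and assume: (stationarity) 2(x† − x⁰) + Σ_{k∈K} λ_k ∇f_k(x†) = 0, and (complementary slackness) λ_k·(f_k(x†) + c_k) = 0 for every k ∈ K. Let N be a neighborhood of x† such that for every k with c_k ≠ 0 (so that f_k(x†) = −c_k > 0) and every x ∈ N: f_k(x) ≥ f_k(x†) + ⟨x − x†, ∇f_k(x†)⟩ − (f_k(x) − f_k(x†))²/(2 f_k(x†)). Then for every x′ ∈ N: ‖x† − x⁰‖² ≤ ‖x′ − x⁰‖² − 2 Σ_{k : c_k ≠ 0} (c_k/w_k)·[f_k(x′) + (f_k(x′) − f_k(x†))²/(2 f_k(x†)) + c_k]. -/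
open scoped RealInnerProductSpace Classical

/-- The inequality obtained in the proof of Theorem 2 by applying the quadratic
non-convexity bound (Assumption 2) to the intermediate KKT inequality. -/
theorem kkt_quadratic_bound_inequality
    {X : Type*} [NormedAddCommGroup X] [InnerProductSpace ℝ X] [FiniteDimensional ℝ X]
    {K : Type*} [Fintype K]
    (x0 : X) (w : K → ℝ) (hw : ∀ k, 0 < w k)
    (f : K → X → ℝ) (g : K → X → X)
    (hf_nonneg : ∀ k x, 0 ≤ f k x)
    (hgrad : ∀ k x, HasGradientAt (f k) (g k x) x)
    (c : K → ℝ) (hc : ∀ k, c k ≤ 0)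
    (xd : X)
    (hstat : (2 : ℝ) • (xd - x0) + ∑ k, (-2 * c k / w k) • g k xd = 0)
    (hcs : ∀ k, (-2 * c k / w k) * (f k xd + c k) = 0)
    (N : Set X) (hN : N ∈ nhds xd)
    (hquad : ∀ k, c k ≠ 0 → ∀ x ∈ N,
      f k x ≥ f k xd + ⟪x - xd, g k xd⟫ - (f k x - f k xd) ^ 2 / (2 * f k xd)) :
    ∀ x' ∈ N,
      ‖xd - x0‖ ^ 2 ≤ ‖x' - x0‖ ^ 2
        - 2 * ∑ k ∈ Finset.univ.filter (fun k => c k ≠ 0),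
            (c k / w k) * (f k x' + (f k x' - f k xd) ^ 2 / (2 * f k xd) + c k) := by
  intro x' hx'
  have hlam_nn : ∀ k, 0 ≤ -2 * c k / w k := fun k =>
    div_nonneg (by nlinarith [hc k]) (le_of_lt (hw k))
  have hfxd : ∀ k, c k ≠ 0 → f k xd = -c k := by
    intro k hk
    have h := hcs k
    have hck : c k < 0 := lt_of_le_of_ne (hc k) hk
    have hlam_pos : 0 < -2 * c k / w k := div_pos (by linarith) (hw k)
    have := mul_eq_zero.mp h
    rcases this with h1 | h2
    · exact absurd h1 (ne_of_gt hlam_pos)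
    · linarith
  -- inner product with stationarity
  have hinner : 2 * ⟪x' - xd, xd - x0⟫ + ∑ k, (-2 * c k / w k) * ⟪x' - xd, g k xd⟫ = 0 := by
    have h0 : ⟪x' - xd, (2 : ℝ) • (xd - x0) + ∑ k, (-2 * c k / w k) • g k xd⟫ = (0 : ℝ) := by
      rw [hstat]; exact inner_zero_right _
    simpa [inner_add_right, inner_smul_right, inner_sum, real_inner_smul_right] using h0
  have hsum_eq : ∑ k ∈ Finset.univ.filter (fun k => c k ≠ 0),
      (-2 * c k / w k) * ⟪x' - xd, g k xd⟫
      = ∑ k, (-2 * c k / w k) * ⟪x' - xd, g k xd⟫ := by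
    apply Finset.sum_filter_of_ne
    intro k _ hne hck
    apply hne
    rw [hck]; ring
  have hterm : ∀ k ∈ Finset.univ.filter (fun k => c k ≠ 0),
      (-2 * c k / w k) * ⟪x' - xd, g k xd⟫
        ≤ (-2 * c k / w k) * (f k x' + (f k x' - f k xd) ^ 2 / (2 * f k xd) + c k) := by
    intro k hk
    have hck : c k ≠ 0 := (Finset.mem_filter.mp hk).2
    have hq := hquad k hck x' hx'
    have hfeq := hfxd k hck
    apply mul_le_mul_of_nonneg_left _ (hlam_nn k)
    linarith [hq]
  have hnorm : ‖x' - x0‖ ^ 2 = ‖x' - xd‖ ^ 2 + 2 * ⟪x' - xd, xd - x0⟫ + ‖xd - x0‖ ^ 2 := by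
    have h : x' - x0 = (x' - xd) + (xd - x0) := by abel
    rw [h, norm_add_sq_real]
  have hsumle : ∑ k ∈ Finset.univ.filter (fun k => c k ≠ 0),
      (-2 * c k / w k) * ⟪x' - xd, g k xd⟫
      ≤ ∑ k ∈ Finset.univ.filter (fun k => c k ≠ 0),
        (-2 * c k / w k) * (f k x' + (f k x' - f k xd) ^ 2 / (2 * f k xd) + c k) :=
    Finset.sum_le_sum hterm
  have hlast : ∑ k ∈ Finset.univ.filter (fun k => c k ≠ 0),
      (-2 * c k / w k) * (f k x' + (f k x' - f k xd) ^ 2 / (2 * f k xd) + c k)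
      = -2 * ∑ k ∈ Finset.univ.filter (fun k => c k ≠ 0),
        (c k / w k) * (f k x' + (f k x' - f k xd) ^ 2 / (2 * f k xd) + c k) := by
    rw [Finset.mul_sum]
    exact Finset.sum_congr rfl (fun k _ => by ring)
  have hsq : 0 ≤ ‖x' - xd‖ ^ 2 := sq_nonneg _
  rw [hlast] at hsumle
  rw [← hsum_eq] at hinner
  linarith
end

section
/- Let η_x > 0 and η_λ > 0 be step sizes and for each k ∈ K let w_k > 0. Suppose (x, λ) ∈ X × ℝ^K with λ_k ≥ 0 for all k is a fixed point of the modified Arrow–Hurwicz updates of Algorithm 1: x = x − η_x·(2(x − x⁰) + Σ_{k∈K} λ_k ∇f_k(x)) and λ_k = max(λ_k + η_λ·(f_k(x) − (1/2)·w_k·λ_k), 0) for each k ∈ K. Define c_k = −(1/2)·w_k·λ_k. Then: (i) x is feasible for c, i.e., f_k(x) ≤ −c_k for all k; (ii) stationarity holds: 2(x − x⁰) + Σ_{k∈K} λ_k ∇f_k(x) = 0; (iii) complementary slackness holds: λ_k·(f_k(x) + c_k) = 0 for all k; and (iv) λ_k = −2c_k/w_k for all k, i.e., the counterfactual condition c =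 −(1/2)Wλ of Theorem 2 is satisfied. -/
/-! A fixed point of the projected ascent step `λ ↦ max (λ + η d) 0` with `η > 0` is exactly a
complementarity pair `0 ≤ λ`, `d ≤ 0`, `λ d = 0`; applied to `d = f_k(x) - w_k λ_k / 2` this gives
feasibility and complementary slackness. A fixed point of the descent step `x ↦ x - η v` with
`η ≠ 0` has `v = 0`, which is stationarity. -/

theorem eq_max_add_mul_zero_iff {a b η : ℝ} (hη : 0 < η) :
    a = max (a + η * b) 0 ↔ 0 ≤ a ∧ b ≤ 0 ∧ a * b = 0 := by
  constructor
  · intro h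
    have ha : 0 ≤ a := h ▸ le_max_right _ _
    rcases ha.eq_or_lt with rfl | ha_pos
    · rw [zero_add, eq_comm, max_eq_right_iff] at h
      exact ⟨le_rfl, nonpos_of_mul_nonpos_right h hη, zero_mul b⟩
    · have hstep : a = a + η * b := by
        rcases max_cases (a + η * b) 0 with ⟨hmax, -⟩ | ⟨hmax, -⟩ <;> rw [hmax] at h <;> linarith
      have hb : b = 0 := (mul_eq_zero.mp (by linarith)).resolve_left hη.ne'
      exact ⟨ha, hb.le, by rw [hb, mul_zero]⟩
  · rintro ⟨ha, hb, hab⟩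
    rcases mul_eq_zero.mp hab with rfl | rfl
    · rw [zero_add, max_eq_right (mul_nonpos_of_nonneg_of_nonpos hη.le hb)]
    · rw [mul_zero, add_zero, max_eq_left ha]

theorem modified_arrow_hurwicz_fixed_point_general
    {X : Type*} [NormedAddCommGroup X] [InnerProductSpace ℝ X]
    {K : Type*} [Fintype K]
    (x0 : X) (w : K → ℝ) (hw : ∀ k, 0 < w k)
    (f : K → X → ℝ) (g : K → X → X)
    (etaX etaL : ℝ) (hetaX : 0 < etaX) (hetaL : 0 < etaL)
    (x : X) (lam : K → ℝ)
    (hfixX : x = x - etaX • ((2 : ℝ) • (x - x0) + ∑ k, lam k • g k x))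
    (hfixL : ∀ k, lam k = max (lam k + etaL * (f k x - (1 / 2) * w k * lam k)) 0) :
    (∀ k, f k x ≤ -(-(1 / 2) * w k * lam k)) ∧
    (2 : ℝ) • (x - x0) + ∑ k, lam k • g k x = 0 ∧
    (∀ k, lam k * (f k x + -(1 / 2) * w k * lam k) = 0) ∧
    (∀ k, lam k = -2 * (-(1 / 2) * w k * lam k) / w k) := by
  have hcompl k := (eq_max_add_mul_zero_iff hetaL).mp (hfixL k)
  refine ⟨fun k => ?_, ?_, fun k => ?_, fun k => ?_⟩
  · linarith [(hcompl k).2.1]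
  · exact (smul_eq_zero_iff_right hetaX.ne').mp (sub_eq_self.mp hfixX.symm)
  · rw [← (hcompl k).2.2]
    ring
  · rw [show -2 * (-(1 / 2) * w k * lam k) = w k * lam k by ring,
      mul_div_cancel_left₀ _ (hw k).ne']

/-- Fixed points of the modified Arrow–Hurwicz iteration of Algorithm 1 are KKT points
of problem (PI) whose multipliers satisfy the counterfactual condition
`c = -(1/2) W λ` of Theorem 2. -/
theorem modified_arrow_hurwicz_fixed_point
    {X : Type*} [NormedAddCommGroup X] [InnerProductSpace ℝ X] [FiniteDimensional ℝ X]
    {K : Type*} [Fintype K]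
    (x0 : X) (w : K → ℝ) (hw : ∀ k, 0 < w k)
    (f : K → X → ℝ) (g : K → X → X)
    (hf_nonneg : ∀ k y, 0 ≤ f k y)
    (hgrad : ∀ k y, HasGradientAt (f k) (g k y) y)
    (etaX etaL : ℝ) (hetaX : 0 < etaX) (hetaL : 0 < etaL)
    (x : X) (lam : K → ℝ) (hlam : ∀ k, 0 ≤ lam k)
    (hfixX : x = x - etaX • ((2 : ℝ) • (x - x0) + ∑ k, lam k • g k x))
    (hfixL : ∀ k, lam k = max (lam k + etaL * (f k x - (1 / 2) * w k * lam k)) 0) :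
    (∀ k, f k x ≤ -(-(1 / 2) * w k * lam k)) ∧
    (2 : ℝ) • (x - x0) + ∑ k, lam k • g k x = 0 ∧
    (∀ k, lam k * (f k x + -(1 / 2) * w k * lam k) = 0) ∧
    (∀ k, lam k = -2 * (-(1 / 2) * w k * lam k) / w k) :=
  modified_arrow_hurwicz_fixed_point_general x0 w hw f g etaX etaL hetaX hetaL x lam hfixX hfixL
end
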